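/- arXiv:2011.13674 — 12 statements merged into one kernel-verified Lean document; each statement's English description precedes it below -/
import Mathlib

section
/- Let A be a real n×n matrix and S a real m×n matrix such that S·Sᵀ is invertible (i.e. S has full row rank m), and suppose the kernel of S is invariant under A, i.e. for every y ∈ ℝⁿ with S·y = 0 one has S·A·y = 0. Let S† = Sᵀ·(S·Sᵀ)⁻¹ denote the Moore–Penrose right inverse of S. Then every complex root of the characteristic polynomial of the m×m matrix S·A·S† is a complex root of the characteristic polynomial of A. In particular, if A is Hurwitz then S·A·S† is Hurwitz. -/
/-! Invariance of `ker S` under `A` gives the intertwining relation `S * A = B * S` with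
`B = S * A * S†`. A left eigenvector `v` of `B` then yields the left eigenvector `v ᵥ* S` of `A`
for the same eigenvalue, nonzero because `S` has a right inverse. -/

open Matrix Polynomial

namespace Matrix

variable {m n : Type*} [Fintype m] [Fintype n] [DecidableEq m]

theorem isRoot_charpoly_iff_exists_vecMul_eq_smul {K : Type*} [Field K] [DecidableEq n]
    (A : Matrix n n K) (μ : K) : A.charpoly.IsRoot μ ↔ ∃ v ≠ 0, v ᵥ* A = μ • v := by
  rw [IsRoot.def, eval_charpoly, ← exists_vecMul_eq_zero_iff]
  simp only [vecMul_sub, sub_eq_zero, scalar_apply]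
  simp [eq_comm, funext_iff]

theorem mul_eq_mul_mul_mul_of_forall_mulVec_eq_zero {R : Type*} [CommRing R]
    {S : Matrix m n R} {T : Matrix n m R} (hST : S * T = 1) {A : Matrix n n R}
    (hA : ∀ y, S *ᵥ y = 0 → S *ᵥ (A *ᵥ y) = 0) : S * A = S * A * T * S := by
  refine ext_iff_mulVec.mpr fun y => ?_
  have hker : S *ᵥ (y - T *ᵥ S *ᵥ y) = 0 := by
    rw [mulVec_sub, mulVec_mulVec, hST, one_mulVec, sub_self]
  simpa only [mulVec_sub, mulVec_mulVec, sub_eq_zero, Matrix.mul_assoc] using hA _ hker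

theorem isRoot_charpoly_of_mul_eq_mul {K : Type*} [Field K] [DecidableEq n] {S : Matrix m n K}
    {T : Matrix n m K} (hST : S * T = 1) {A : Matrix n n K} {B : Matrix m m K}
    (hAB : S * A = B * S) {μ : K} (hμ : B.charpoly.IsRoot μ) : A.charpoly.IsRoot μ := by
  obtain ⟨v, hv0, hv⟩ := (isRoot_charpoly_iff_exists_vecMul_eq_smul B μ).mp hμ
  refine (isRoot_charpoly_iff_exists_vecMul_eq_smul A μ).mpr ⟨v ᵥ* S, fun hvS => hv0 ?_, ?_⟩
  · rw [← vecMul_one v, ← hST, ← vecMul_vecMul, hvS, zero_vecMul]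
  · rw [vecMul_vecMul, hAB, ← vecMul_vecMul, hv, smul_vecMul]

end Matrix

/-- If `ker S` is `A`-invariant and `S` has full row rank (so that `S·Sᵀ` is invertible),
then every complex root of the characteristic polynomial of `S·A·S†`, where
`S† = Sᵀ·(S·Sᵀ)⁻¹`, is a complex root of the characteristic polynomial of `A`.
In particular, if `A` is Hurwitz then so is `S·A·S†`. -/
theorem stmt1 {n m : ℕ}
    (A : Matrix (Fin n) (Fin n) ℝ) (S : Matrix (Fin m) (Fin n) ℝ)
    (hS : IsUnit (S * Sᵀ))
    (hinv : ∀ y : Fin n → ℝ, S.mulVec y = 0 → S.mulVec (A.mulVec y) = 0) :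
    (∀ μ : ℂ, ((S * A * (Sᵀ * (S * Sᵀ)⁻¹)).charpoly.map (algebraMap ℝ ℂ)).IsRoot μ →
        (A.charpoly.map (algebraMap ℝ ℂ)).IsRoot μ) ∧
    ((∀ μ : ℂ, (A.charpoly.map (algebraMap ℝ ℂ)).IsRoot μ → μ.re < 0) →
      ∀ μ : ℂ, ((S * A * (Sᵀ * (S * Sᵀ)⁻¹)).charpoly.map (algebraMap ℝ ℂ)).IsRoot μ →
        μ.re < 0) := by
  set T := Sᵀ * (S * Sᵀ)⁻¹
  have hST : S * T = 1 := by
    rw [← Matrix.mul_assoc]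
    exact mul_nonsing_inv _ ((isUnit_iff_isUnit_det _).mp hS)
  have hSA := mul_eq_mul_mul_mul_of_forall_mulVec_eq_zero hST hinv
  have roots_subset : ∀ μ : ℂ, ((S * A * T).charpoly.map (algebraMap ℝ ℂ)).IsRoot μ →
      (A.charpoly.map (algebraMap ℝ ℂ)).IsRoot μ := by
    intro μ hμ
    rw [← charpoly_map] at hμ ⊢
    refine isRoot_charpoly_of_mul_eq_mul (S := S.map (algebraMap ℝ ℂ))
      (T := T.map (algebraMap ℝ ℂ)) ?_ ?_ hμ
    · rw [← Matrix.map_mul, hST, Matrix.map_one _ (map_zero _) (map_one _)]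
    · rw [← Matrix.map_mul, ← Matrix.map_mul, ← hSA]
  exact ⟨roots_subset, fun hA μ hμ => hA μ (roots_subset μ hμ)⟩
end

section
/- Let A, B, K, S be real matrices of sizes n×n, n×m, m×n, m×n with A_cl = A + B·K, such that S·Sᵀ is invertible, S·B is invertible, and for every y ∈ ℝⁿ with S·y = 0 one has S·A_cl·y = 0. Let S† = Sᵀ·(S·Sᵀ)⁻¹. Let v, Δ : ℝ → ℝᵐ be functions and let y : ℝ → ℝⁿ be such that at every time t, y has derivative A·y(t) + B·(K·y(t) + (S·B)⁻¹·v(t) + Δ(t)). Then the function σ(t) := S·y(t) satisfies, at every t, the derivative identity σ′(t) = (S·A_cl·S†)·σ(t) + v(t) + S·B·Δ(t). -/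
open Matrix

/-!
Write `A_cl = A + B·K` and `S† = Sᵀ·(S·Sᵀ)⁻¹`. Since `S·S† = 1`, the vector `x - S†·S·x` lies in
`ker S` for every `x`; invariance of `ker S` under `A_cl` then gives `S·A_cl·x = S·A_cl·S†·(S·x)`.
Differentiating `σ = S·y` and using `S·B·(S·B)⁻¹ = 1` turns the closed-loop dynamics into the
stated equation for `σ`.
-/

theorem HasDerivAt.matrix_mulVec {𝕜 : Type*} [NontriviallyNormedField 𝕜] [CompleteSpace 𝕜]
    {ι κ : Type*} [Fintype ι] [Fintype κ] (S : Matrix ι κ 𝕜) {y : 𝕜 → κ → 𝕜} {y' : κ → 𝕜} {t : 𝕜}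
    (hy : HasDerivAt y y' t) : HasDerivAt (fun τ => S *ᵥ y τ) (S *ᵥ y') t :=
  (mulVecLin S).toContinuousLinearMap.hasFDerivAt.comp_hasDerivAt t hy

theorem Matrix.mul_transpose_mul_inv_eq_one {R : Type*} [CommRing R] {m n : Type*}
    [Fintype m] [DecidableEq m] [Fintype n] {S : Matrix m n R} (hS : IsUnit (S * Sᵀ)) :
    S * (Sᵀ * (S * Sᵀ)⁻¹) = 1 := by
  rw [← Matrix.mul_assoc, mul_nonsing_inv _ ((isUnit_iff_isUnit_det _).mp hS)]

theorem Matrix.mulVec_mulVec_eq_of_ker_le {R : Type*} [CommRing R] {m n : Type*}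
    [Fintype m] [DecidableEq m] [Fintype n] {S : Matrix m n R} {M : Matrix n n R} {T : Matrix n m R}
    (hST : S * T = 1) (hker : ∀ x, S *ᵥ x = 0 → S *ᵥ (M *ᵥ x) = 0) (x : n → R) :
    S *ᵥ (M *ᵥ x) = (S * M * T) *ᵥ (S *ᵥ x) := by
  have hx : S *ᵥ (x - T *ᵥ (S *ᵥ x)) = 0 := by
    rw [mulVec_sub, mulVec_mulVec, hST, one_mulVec, sub_self]
  have h := hker _ hx
  rw [mulVec_sub, mulVec_sub, sub_eq_zero] at h
  rw [h, mulVec_mulVec, mulVec_mulVec, mulVec_mulVec, Matrix.mul_assoc]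

/-- The σ-dynamics outside the sliding manifold: if `ẏ = A·y + B·(K·y + (S·B)⁻¹·v + Δ)`,
`S·Sᵀ` and `S·B` are invertible and `ker S` is invariant under `A_cl = A + B·K`, then
`σ = S·y` satisfies `σ′ = (S·A_cl·S†)·σ + v + S·B·Δ`, where `S† = Sᵀ·(S·Sᵀ)⁻¹`. -/
theorem stmt2 {n m : ℕ}
    (A : Matrix (Fin n) (Fin n) ℝ) (B : Matrix (Fin n) (Fin m) ℝ)
    (K S : Matrix (Fin m) (Fin n) ℝ)
    (hS : IsUnit (S * Sᵀ)) (hSB : IsUnit (S * B))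
    (hinv : ∀ y : Fin n → ℝ, S.mulVec y = 0 → S.mulVec ((A + B * K).mulVec y) = 0)
    (v Δ : ℝ → Fin m → ℝ) (y : ℝ → Fin n → ℝ)
    (hy : ∀ t, HasDerivAt y
      (A.mulVec (y t) + B.mulVec (K.mulVec (y t) + (S * B)⁻¹.mulVec (v t) + Δ t)) t) :
    ∀ t, HasDerivAt (fun τ => S.mulVec (y τ))
      ((S * (A + B * K) * (Sᵀ * (S * Sᵀ)⁻¹)).mulVec (S.mulVec (y t))
        + v t + (S * B).mulVec (Δ t)) t := by
  intro t
  have hclosed := mulVec_mulVec_eq_of_ker_le (mul_transpose_mul_inv_eq_one hS) hinv (y t)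
  have hSBinv : S * B * (S * B)⁻¹ = 1 := mul_nonsing_inv _ ((isUnit_iff_isUnit_det _).mp hSB)
  convert (hy t).matrix_mulVec S using 1
  rw [← hclosed]
  simp only [mulVec_add, add_mulVec, mulVec_mulVec, ← Matrix.mul_assoc, hSBinv, one_mulVec]
  abel
end

section
/- Let α > 0 and β > 0, and let V : ℝ → ℝ be a differentiable function such that V(t) ≥ 0 for all t ≥ 0 and V′(t) ≤ −α·V(t) − β·√(V(t)) for all t ≥ 0. Then V(t) = 0 for every t ≥ t_s, where t_s = (2/α)·ln((α/β)·√(V(0)) + 1). -/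
/-!
On any interval where `V > 0`, the function `W = √V` satisfies the linear differential inequality
`W′ ≤ -(α/2) W - β/2`, so `exp (α t / 2) · (α W + β)` is nonincreasing there. At `t_s` the
exponential factor equals `(α √(V 0) + β) / β`, which forces `W (t_s) ≤ 0`. Since `V` is
nonincreasing and nonnegative, `V` cannot stay positive up to `t_s`, and once it reaches `0` it
stays there.
-/

open Real Set

theorem antitoneOn_exp_mul_mul_add_of_deriv_le {f f' : ℝ → ℝ} {a b l u : ℝ} (ha : 0 ≤ a)
    (hf : ContinuousOn f (Icc l u)) (hderiv : ∀ x ∈ Ioo l u, HasDerivAt f (f' x) x)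
    (hle : ∀ x ∈ Ioo l u, f' x ≤ -a * f x - b) :
    AntitoneOn (fun t => exp (a * t) * (a * f t + b)) (Icc l u) := by
  refine antitoneOn_of_hasDerivWithinAt_nonpos (convex_Icc l u)
    (f' := fun x => exp (a * x) * (a * (a * f x + b + f' x))) ?_ (fun x hx => ?_) (fun x hx => ?_)
  · exact (continuous_exp.comp (continuous_const_mul a)).continuousOn.mul
      ((continuousOn_const.mul hf).add continuousOn_const)
  · rw [interior_Icc] at hx
    have hexp : HasDerivAt (fun t => exp (a * t)) (exp (a * x) * a) x := by
      simpa using ((hasDerivAt_id x).const_mul a).exp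
    exact ((hexp.mul (((hderiv x hx).const_mul a).add_const b)).congr_deriv
      (by ring)).hasDerivWithinAt
  · rw [interior_Icc] at hx
    exact mul_nonpos_of_nonneg_of_nonpos (exp_pos _).le
      (mul_nonpos_of_nonneg_of_nonpos ha (by linarith [hle x hx]))

/-- `T` is the time at which the solution of `f′ = -a f - b` started at `f 0` reaches zero. -/
theorem le_zero_of_deriv_le_neg_mul_sub {f f' : ℝ → ℝ} {a b T : ℝ} (ha : 0 < a) (hb : b ≠ 0)
    (hT0 : 0 ≤ T) (hT : exp (a * T) = a / b * f 0 + 1)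
    (hf : ContinuousOn f (Icc 0 T)) (hderiv : ∀ x ∈ Ioo 0 T, HasDerivAt f (f' x) x)
    (hle : ∀ x ∈ Ioo 0 T, f' x ≤ -a * f x - b) :
    f T ≤ 0 := by
  have hmono := antitoneOn_exp_mul_mul_add_of_deriv_le ha.le hf hderiv hle
    (left_mem_Icc.mpr hT0) (right_mem_Icc.mpr hT0) hT0
  simp only [mul_zero, exp_zero, one_mul] at hmono
  have hexpT : exp (a * T) * b = a * f 0 + b := by rw [hT]; field_simp
  have : exp (a * T) * (a * f T) ≤ 0 := by linarith [mul_add (exp (a * T)) (a * f T) b]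
  exact nonpos_of_mul_nonpos_right (nonpos_of_mul_nonpos_right this (exp_pos _)) ha

theorem div_two_mul_sqrt_le_of_le {v d α β : ℝ} (hv : 0 < v) (hd : d ≤ -α * v - β * √v) :
    d / (2 * √v) ≤ -(α / 2) * √v - β / 2 := by
  rw [div_le_iff₀ (by positivity)]
  have := mul_self_sqrt hv.le
  linear_combination hd + α * this

/-- Finite settling time: if `V ≥ 0` and `V′ ≤ −α·V − β·√V` on `[0, ∞)` with `α, β > 0`,
then `V(t) = 0` for all `t ≥ t_s = (2/α)·ln((α/β)·√(V 0) + 1)`. -/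
theorem stmt3 (α β : ℝ) (hα : 0 < α) (hβ : 0 < β) (V : ℝ → ℝ)
    (hV : Differentiable ℝ V)
    (hnonneg : ∀ t, 0 ≤ t → 0 ≤ V t)
    (hdecay : ∀ t, 0 ≤ t → deriv V t ≤ -α * V t - β * Real.sqrt (V t)) :
    ∀ t, (2 / α) * Real.log ((α / β) * Real.sqrt (V 0) + 1) ≤ t → V t = 0 := by
  set ts := (2 / α) * log ((α / β) * √(V 0) + 1)
  have harg : 1 ≤ (α / β) * √(V 0) + 1 := by
    have := mul_nonneg (div_pos hα hβ).le (sqrt_nonneg (V 0))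
    linarith
  have hts : 0 ≤ ts := mul_nonneg (by positivity) (log_nonneg harg)
  have hanti : AntitoneOn V (Ici 0) := by
    refine antitoneOn_of_deriv_nonpos (convex_Ici 0) hV.continuous.continuousOn
      hV.differentiableOn fun x hx => ?_
    rw [interior_Ici] at hx
    nlinarith [hdecay x hx.le, hnonneg x hx.le, sqrt_nonneg (V x)]
  suffices hVts : V ts = 0 by
    intro t ht
    exact le_antisymm (hVts ▸ hanti hts (le_trans hts ht) ht) (hnonneg t (le_trans hts ht))
  by_contra hne
  have hpos : ∀ s ∈ Icc 0 ts, 0 < V s := fun s hs =>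
    lt_of_lt_of_le ((hnonneg ts hts).lt_of_ne' hne) (hanti hs.1 hts hs.2)
  have hexp : exp (α / 2 * ts) = (α / 2) / (β / 2) * √(V 0) + 1 := by
    rw [show α / 2 * ts = log ((α / β) * √(V 0) + 1) by simp only [ts]; field_simp,
      exp_log (by linarith), div_div_div_cancel_right₀ two_ne_zero]
  have hsqrt := le_zero_of_deriv_le_neg_mul_sub (f := fun s => √(V s))
    (f' := fun s => deriv V s / (2 * √(V s))) (half_pos hα) (half_pos hβ).ne' hts hexp
    (hV.continuous.sqrt.continuousOn)
    (fun x hx => (hV x).hasDerivAt.sqrt (hpos x (Ioo_subset_Icc_self hx)).ne')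
    (fun x hx => div_two_mul_sqrt_le_of_le (hpos x (Ioo_subset_Icc_self hx)) (hdecay x hx.1.le))
  exact (sqrt_pos.mpr (hpos ts (right_mem_Icc.mpr hts))).not_ge hsqrt
end

section
/- Let A be a real m×m matrix, and let P and Q be real symmetric m×m matrices satisfying the Lyapunov equation Aᵀ·P + P·A = −Q. Assume there are constants 0 < p₁ ≤ p₂ and q₁ > 0 such that p₁·‖x‖² ≤ xᵀ·P·x ≤ p₂·‖x‖² and q₁·‖x‖² ≤ xᵀ·Q·x for all x ∈ ℝᵐ (Euclidean norm). Let D ≥ 0, μ⋆ > 0 and μ ≥ (1/p₁)·(μ⋆/2 + p₂·D). Let σ : ℝ → ℝᵐ and d : ℝ → ℝᵐ with ‖d(t)‖ ≤ D for all t. If at a time t one has σ(t) ≠ 0 and σ has derivative A·σ(t) − μ·σ(t)/‖σ(t)‖ + d(t) at t, then the function V(t) := σ(t)ᵀ·P·σ(t) is differentiable at t with V′(t) ≤ −(q₁/p₂)·V(t) − (μ⋆/√p₂)·√(V(t)). -/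
/-!
With `V = σᵀPσ` one has `V' = 2σᵀPσ'`. The Lyapunov equation turns `2σᵀPAσ` into
`-σᵀQσ ≤ -q₁‖σ‖²`; the control contributes `-2(μ/‖σ‖)σᵀPσ ≤ -2μp₁‖σ‖`, which by the choice of
`μ` absorbs the disturbance term `2σᵀPd ≤ 2p₂D‖σ‖` (Cauchy–Schwarz for the form `P`) with
`μ⋆‖σ‖` to spare. Finally `V ≤ p₂‖σ‖²` converts `-q₁‖σ‖² - μ⋆‖σ‖` into the bound in terms of `V`.
-/

open Matrix

/-- The Euclidean norm on `Fin m → ℝ`. -/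
noncomputable def euclNorm {m : ℕ} (x : Fin m → ℝ) : ℝ := Real.sqrt (∑ i, x i ^ 2)

section Calculus

variable {𝕜 ι ι' : Type*} [NontriviallyNormedField 𝕜] [Fintype ι]
  {f g : 𝕜 → ι → 𝕜} {f' g' : ι → 𝕜} {t : 𝕜}

theorem HasDerivAt.dotProduct (hf : HasDerivAt f f' t) (hg : HasDerivAt g g' t) :
    HasDerivAt (fun τ => f τ ⬝ᵥ g τ) (f' ⬝ᵥ g t + f t ⬝ᵥ g') t := by
  unfold _root_.dotProduct
  rw [← Finset.sum_add_distrib]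
  exact HasDerivAt.fun_sum fun i _ => (hasDerivAt_pi.mp hf i).mul (hasDerivAt_pi.mp hg i)

theorem HasDerivAt.matrix_mulVec_s4 (A : Matrix ι' ι 𝕜) (hf : HasDerivAt f f' t) :
    HasDerivAt (fun τ => A *ᵥ f τ) (A *ᵥ f') t :=
  hasDerivAt_pi.mpr fun i => by
    simpa [mulVec] using (hasDerivAt_const t (A i)).dotProduct hf

end Calculus

theorem Matrix.IsSymm.dotProduct_mulVec_comm {R ι : Type*} [CommSemiring R] [Fintype ι]
    {P : Matrix ι ι R} (hP : P.IsSymm) (x y : ι → R) :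
    x ⬝ᵥ P *ᵥ y = y ⬝ᵥ P *ᵥ x := by
  rw [dotProduct_mulVec, dotProduct_comm, ← mulVec_transpose, hP.eq]

theorem HasDerivAt.dotProduct_mulVec_self {𝕜 ι : Type*} [NontriviallyNormedField 𝕜]
    [Fintype ι] {σ : 𝕜 → ι → 𝕜} {σ' : ι → 𝕜} {t : 𝕜} {P : Matrix ι ι 𝕜} (hP : P.IsSymm)
    (hσ : HasDerivAt σ σ' t) :
    HasDerivAt (fun τ => σ τ ⬝ᵥ P *ᵥ σ τ) (2 * (σ t ⬝ᵥ P *ᵥ σ')) t := by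
  convert hσ.dotProduct (hσ.matrix_mulVec_s4 P) using 1
  rw [two_mul, hP.dotProduct_mulVec_comm σ']

theorem Matrix.dotProduct_mulVec_mulVec_of_lyapunov {R ι : Type*} [CommRing R] [Fintype ι]
    {A P Q : Matrix ι ι R} (hP : P.IsSymm) (hLyap : Aᵀ * P + P * A = -Q) (x : ι → R) :
    2 * (x ⬝ᵥ P *ᵥ (A *ᵥ x)) = -(x ⬝ᵥ Q *ᵥ x) := by
  have h := congrArg (fun M => x ⬝ᵥ M *ᵥ x) hLyap
  simp only [add_mulVec, ← mulVec_mulVec, dotProduct_add, neg_mulVec, dotProduct_neg] at h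
  rw [← h, dotProduct_mulVec x Aᵀ, vecMul_transpose, ← hP.dotProduct_mulVec_comm, two_mul]

theorem euclNorm_nonneg {m : ℕ} (x : Fin m → ℝ) : 0 ≤ euclNorm x := Real.sqrt_nonneg _

theorem euclNorm_pos {m : ℕ} {x : Fin m → ℝ} (hx : x ≠ 0) : 0 < euclNorm x := by
  obtain ⟨i, hi⟩ := Function.ne_iff.mp hx
  exact Real.sqrt_pos.mpr <|
    Finset.sum_pos' (fun j _ => sq_nonneg _) ⟨i, Finset.mem_univ i, sq_pos_of_ne_zero hi⟩

theorem Matrix.IsSymm.dotProduct_mulVec_le {m : ℕ} {P : Matrix (Fin m) (Fin m) ℝ}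
    (hP : P.IsSymm) (hP₀ : ∀ x, 0 ≤ x ⬝ᵥ P *ᵥ x) {c : ℝ} (hc : 0 ≤ c)
    (hPc : ∀ x, x ⬝ᵥ P *ᵥ x ≤ c * euclNorm x ^ 2) (x y : Fin m → ℝ) :
    x ⬝ᵥ P *ᵥ y ≤ c * euclNorm x * euclNorm y := by
  have hCS : (x ⬝ᵥ P *ᵥ y) * (y ⬝ᵥ P *ᵥ x) ≤ (x ⬝ᵥ P *ᵥ x) * (y ⬝ᵥ P *ᵥ y) := by
    simpa only [toBilin'_apply'] using (toBilin' P).apply_mul_apply_le_of_forall_zero_le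
      (by simpa only [toBilin'_apply'] using hP₀) x y
  rw [hP.dotProduct_mulVec_comm y x, ← sq] at hCS
  have hx := euclNorm_nonneg x
  have hy := euclNorm_nonneg y
  refine (le_abs_self _).trans (abs_le_of_sq_le_sq ?_ (by positivity))
  calc _ ≤ _ := hCS
    _ ≤ (c * euclNorm x ^ 2) * (c * euclNorm y ^ 2) :=
        mul_le_mul (hPc x) (hPc y) (hP₀ y) (by positivity)
    _ = _ := by ring

theorem two_mul_dotProduct_mulVec_unitVectorControl_le {m : ℕ}
    {A P Q : Matrix (Fin m) (Fin m) ℝ} (hP : P.IsSymm) (hLyap : Aᵀ * P + P * A = -Q)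
    {p₁ p₂ q₁ D μstar μ : ℝ} (hp₁ : 0 < p₁) (hp₂ : 0 ≤ p₂)
    (hPlow : ∀ x : Fin m → ℝ, p₁ * euclNorm x ^ 2 ≤ x ⬝ᵥ P *ᵥ x)
    (hPhigh : ∀ x : Fin m → ℝ, x ⬝ᵥ P *ᵥ x ≤ p₂ * euclNorm x ^ 2)
    (hμstar : 0 ≤ μstar) (hμ : (1 / p₁) * (μstar / 2 + p₂ * D) ≤ μ)
    {x w : Fin m → ℝ} (hx : x ≠ 0) (hQx : q₁ * euclNorm x ^ 2 ≤ x ⬝ᵥ Q *ᵥ x)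
    (hw : euclNorm w ≤ D) :
    2 * (x ⬝ᵥ P *ᵥ (A *ᵥ x - (μ / euclNorm x) • x + w))
      ≤ -(q₁ * euclNorm x ^ 2) - μstar * euclNorm x := by
  set n := euclNorm x
  have hn : 0 < n := euclNorm_pos hx
  have hμp₁ : μstar / 2 + p₂ * D ≤ μ * p₁ := by
    rwa [one_div_mul_eq_div, div_le_iff₀ hp₁] at hμ
  have hμ₀ : 0 ≤ μ := by
    have hD : 0 ≤ D := (euclNorm_nonneg w).trans hw
    exact nonneg_of_mul_nonneg_left (hμp₁.trans' (by positivity)) hp₁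
  have hcontrol : μ * p₁ * n ≤ μ / n * (x ⬝ᵥ P *ᵥ x) := by
    calc μ * p₁ * n = μ / n * (p₁ * n ^ 2) := by field_simp
      _ ≤ _ := mul_le_mul_of_nonneg_left (hPlow x) (by positivity)
  have hP₀ (y : Fin m → ℝ) : 0 ≤ y ⬝ᵥ P *ᵥ y := (hPlow y).trans' (by positivity)
  have hdisturbance : x ⬝ᵥ P *ᵥ w ≤ p₂ * n * D :=
    (hP.dotProduct_mulVec_le hP₀ hp₂ hPhigh x w).trans (by gcongr)
  have hexpand : 2 * (x ⬝ᵥ P *ᵥ (A *ᵥ x - (μ / n) • x + w))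
      = 2 * (x ⬝ᵥ P *ᵥ (A *ᵥ x)) - 2 * (μ / n * (x ⬝ᵥ P *ᵥ x))
        + 2 * (x ⬝ᵥ P *ᵥ w) := by
    simp only [mulVec_add, mulVec_sub, mulVec_smul, dotProduct_add, dotProduct_sub,
      dotProduct_smul, smul_eq_mul]
    ring
  rw [hexpand, dotProduct_mulVec_mulVec_of_lyapunov hP hLyap]
  linarith [mul_le_mul_of_nonneg_right hμp₁ hn.le]

theorem neg_mul_sq_sub_mul_le_of_le_mul_sq {p₂ q₁ μstar n V : ℝ} (hp₂ : 0 < p₂)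
    (hq₁ : 0 ≤ q₁) (hμstar : 0 ≤ μstar) (hn : 0 ≤ n) (hV : V ≤ p₂ * n ^ 2) :
    -(q₁ * n ^ 2) - μstar * n ≤ -(q₁ / p₂) * V - μstar / √p₂ * √V := by
  have hquad : q₁ / p₂ * V ≤ q₁ * n ^ 2 := by
    calc q₁ / p₂ * V ≤ q₁ / p₂ * (p₂ * n ^ 2) := by gcongr
      _ = q₁ * n ^ 2 := by field_simp
  have hsqrt : μstar / √p₂ * √V ≤ μstar * n := by
    calc μstar / √p₂ * √V ≤ μstar / √p₂ * (√p₂ * n) := by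
          gcongr
          simpa [Real.sqrt_mul hp₂.le, Real.sqrt_sq hn] using Real.sqrt_le_sqrt hV
      _ = μstar * n := by field_simp
  linarith

theorem stmt4_general {m : ℕ}
    (A P Q : Matrix (Fin m) (Fin m) ℝ)
    (hP : P.IsSymm)
    (hLyap : Aᵀ * P + P * A = -Q)
    (p₁ p₂ q₁ : ℝ) (hp₁ : 0 < p₁) (hp₁₂ : p₁ ≤ p₂) (hq₁ : 0 < q₁)
    (hPlow : ∀ x : Fin m → ℝ, p₁ * euclNorm x ^ 2 ≤ x ⬝ᵥ P.mulVec x)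
    (hPhigh : ∀ x : Fin m → ℝ, x ⬝ᵥ P.mulVec x ≤ p₂ * euclNorm x ^ 2)
    (hQlow : ∀ x : Fin m → ℝ, q₁ * euclNorm x ^ 2 ≤ x ⬝ᵥ Q.mulVec x)
    (D μstar μ : ℝ) (hμstar : 0 < μstar)
    (hμ : (1 / p₁) * (μstar / 2 + p₂ * D) ≤ μ)
    (σ d : ℝ → Fin m → ℝ) (hd : ∀ t, euclNorm (d t) ≤ D)
    (t : ℝ) (hσt : σ t ≠ 0)
    (hderiv : HasDerivAt σ (A.mulVec (σ t) - (μ / euclNorm (σ t)) • σ t + d t) t) :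
    ∃ V' : ℝ, HasDerivAt (fun τ => σ τ ⬝ᵥ P.mulVec (σ τ)) V' t ∧
      V' ≤ -(q₁ / p₂) * (σ t ⬝ᵥ P.mulVec (σ t))
        - (μstar / Real.sqrt p₂) * Real.sqrt (σ t ⬝ᵥ P.mulVec (σ t)) := by
  have hp₂ : 0 < p₂ := hp₁.trans_le hp₁₂
  refine ⟨_, hderiv.dotProduct_mulVec_self hP, ?_⟩
  calc _ ≤ -(q₁ * euclNorm (σ t) ^ 2) - μstar * euclNorm (σ t) :=
        two_mul_dotProduct_mulVec_unitVectorControl_le hP hLyap hp₁ hp₂.le hPlow hPhigh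
          hμstar.le hμ hσt (hQlow (σ t)) (hd t)
    _ ≤ _ := neg_mul_sq_sub_mul_le_of_le_mul_sq hp₂ hq₁.le hμstar.le (euclNorm_nonneg _)
        (hPhigh (σ t))

/-- Lyapunov decrease estimate for the unit-vector controller: with
`AᵀP + PA = −Q`, `p₁‖x‖² ≤ xᵀPx ≤ p₂‖x‖²`, `q₁‖x‖² ≤ xᵀQx`, `‖d(t)‖ ≤ D` and
`μ ≥ (1/p₁)(μ⋆/2 + p₂D)`, if at time `t` we have `σ(t) ≠ 0` and
`σ′(t) = A·σ(t) − μ·σ(t)/‖σ(t)‖ + d(t)`, then `V = σᵀPσ` is differentiable at `t`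
with `V′(t) ≤ −(q₁/p₂)·V(t) − (μ⋆/√p₂)·√(V(t))`. -/
theorem stmt4 {m : ℕ}
    (A P Q : Matrix (Fin m) (Fin m) ℝ)
    (hP : P.IsSymm) (hQ : Q.IsSymm)
    (hLyap : Aᵀ * P + P * A = -Q)
    (p₁ p₂ q₁ : ℝ) (hp₁ : 0 < p₁) (hp₁₂ : p₁ ≤ p₂) (hq₁ : 0 < q₁)
    (hPlow : ∀ x : Fin m → ℝ, p₁ * euclNorm x ^ 2 ≤ x ⬝ᵥ P.mulVec x)
    (hPhigh : ∀ x : Fin m → ℝ, x ⬝ᵥ P.mulVec x ≤ p₂ * euclNorm x ^ 2)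
    (hQlow : ∀ x : Fin m → ℝ, q₁ * euclNorm x ^ 2 ≤ x ⬝ᵥ Q.mulVec x)
    (D μstar μ : ℝ) (hD : 0 ≤ D) (hμstar : 0 < μstar)
    (hμ : (1 / p₁) * (μstar / 2 + p₂ * D) ≤ μ)
    (σ d : ℝ → Fin m → ℝ) (hd : ∀ t, euclNorm (d t) ≤ D)
    (t : ℝ) (hσt : σ t ≠ 0)
    (hderiv : HasDerivAt σ (A.mulVec (σ t) - (μ / euclNorm (σ t)) • σ t + d t) t) :
    ∃ V' : ℝ, HasDerivAt (fun τ => σ τ ⬝ᵥ P.mulVec (σ τ)) V' t ∧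
      V' ≤ -(q₁ / p₂) * (σ t ⬝ᵥ P.mulVec (σ t))
        - (μstar / Real.sqrt p₂) * Real.sqrt (σ t ⬝ᵥ P.mulVec (σ t)) :=
  stmt4_general A P Q hP hLyap p₁ p₂ q₁ hp₁ hp₁₂ hq₁ hPlow hPhigh hQlow D μstar μ hμstar hμ σ d hd t
    hσt hderiv
end

section
/- Let T > 0 and n = m + k. Let A : ℝ → (real n×n matrices) be continuous with A(t + T) = A(t) for all t. Let Ψ : ℝ → (real n×n matrices) satisfy Ψ(0) = I, Ψ(t) is invertible for each t, and at every t the derivative of Ψ equals A(t)·Ψ(t) (so Ψ is the state-transition matrix and Ψ(T) is the monodromy matrix). Let X₀ be a real n×k matrix of rank k, and let S : ℝ → (real m×n matrices) satisfy S(t + T) = S(t) for all t, rank S(t) = m for all t, and S(t)·Ψ(t)·X₀ = 0 for all t. Then there exists an invertible real k×k matrix N such that Ψ(T)·X₀ = X₀·N; that is, the column span of X₀ is an invariant subspace of the monodromy matrix Ψ(T). -/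
open Matrix

attribute [local instance] Matrix.normedAddCommGroup Matrix.normedSpace

/-! `S 0` has full row rank `m` and kills `X₀ = Ψ 0 * X₀`, so by rank–nullity its kernel is
exactly the `k`-dimensional column span of `X₀`. By periodicity `S 0 = S T` also kills
`Ψ T * X₀`, whose columns therefore lie in that span, i.e. `Ψ T * X₀ = X₀ * N`; and `N` is
invertible because `X₀ * N` still has rank `k`. -/

namespace Matrix

variable {K R : Type*} {l m n : Type*}

lemma range_mulVecLin_le_ker_of_mul_eq_zero [CommSemiring R] [Fintype m] [Fintype n]
    {S : Matrix l m R} {X : Matrix m n R} (h : S * X = 0) :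
    LinearMap.range X.mulVecLin ≤ LinearMap.ker S.mulVecLin :=
  LinearMap.range_le_ker_iff.2 <| by rw [← mulVecLin_mul, h, mulVecLin_zero]

lemma range_mulVecLin_eq_ker_of_mul_eq_zero [Field K] [Fintype m] [Fintype n]
    {S : Matrix l m K} {X : Matrix m n K}
    (h : S * X = 0) (hrank : S.rank + X.rank = Fintype.card m) :
    LinearMap.range X.mulVecLin = LinearMap.ker S.mulVecLin := by
  refine Submodule.eq_of_le_of_finrank_le (range_mulVecLin_le_ker_of_mul_eq_zero h) ?_
  have hnullity := LinearMap.finrank_range_add_finrank_ker S.mulVecLin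
  rw [Module.finrank_fintype_fun_eq_card] at hnullity
  change S.rank + _ = _ at hnullity
  change _ ≤ X.rank
  omega

lemma exists_eq_mul_of_range_mulVecLin_le [CommSemiring R] [Fintype m] [Fintype n]
    {X : Matrix l m R} {Y : Matrix l n R}
    (h : LinearMap.range Y.mulVecLin ≤ LinearMap.range X.mulVecLin) :
    ∃ N : Matrix m n R, Y = X * N := by
  have hcol (j : n) : Y.col j ∈ LinearMap.range X.mulVecLin :=
    h <| by rw [range_mulVecLin]; exact Submodule.subset_span ⟨j, rfl⟩
  choose c hc using hcol
  refine ⟨(of c)ᵀ, ext fun i j => ?_⟩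
  rw [← col_apply Y j i, ← hc j]
  simp [mulVec, dotProduct, mul_apply]

lemma isUnit_of_rank_eq_card [Field K] [Fintype n] [DecidableEq n] {N : Matrix n n K}
    (h : N.rank = Fintype.card n) : IsUnit N := by
  refine mulVec_surjective_iff_isUnit.1 <| LinearMap.range_eq_top (f := N.mulVecLin) |>.1 ?_
  exact Submodule.eq_top_of_finrank_eq <| h.trans (Module.finrank_fintype_fun_eq_card K).symm

lemma isUnit_of_rank_mul_eq_card [Field K] [Fintype n] [DecidableEq n] {X : Matrix m n K}
    {N : Matrix n n K} (h : (X * N).rank = Fintype.card n) : IsUnit N :=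
  isUnit_of_rank_eq_card <| le_antisymm N.rank_le_card_width (h ▸ rank_mul_le_right X N)

end Matrix

theorem stmt5_general {m k : ℕ} (T : ℝ)
    (Ψ : ℝ → Matrix (Fin (m + k)) (Fin (m + k)) ℝ)
    (hΨ0 : Ψ 0 = 1) (hΨinv : ∀ t, IsUnit (Ψ t))
    (X₀ : Matrix (Fin (m + k)) (Fin k) ℝ) (hX₀ : X₀.rank = k)
    (S : ℝ → Matrix (Fin m) (Fin (m + k)) ℝ)
    (hSper : ∀ t, S (t + T) = S t) (hSrank : ∀ t, (S t).rank = m)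
    (hannih : ∀ t, S t * Ψ t * X₀ = 0) :
    ∃ N : Matrix (Fin k) (Fin k) ℝ, IsUnit N ∧ Ψ T * X₀ = X₀ * N := by
  have hX₀ker : S 0 * X₀ = 0 := by simpa [hΨ0] using hannih 0
  have hΨX₀ker : S 0 * (Ψ T * X₀) = 0 := by
    simpa [← Matrix.mul_assoc, zero_add T ▸ hSper 0] using hannih T
  have hspan : LinearMap.range X₀.mulVecLin = LinearMap.ker (S 0).mulVecLin :=
    range_mulVecLin_eq_ker_of_mul_eq_zero hX₀ker (by simp [hSrank, hX₀])
  obtain ⟨N, hN⟩ := exists_eq_mul_of_range_mulVecLin_le <|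
    hspan ▸ range_mulVecLin_le_ker_of_mul_eq_zero hΨX₀ker
  have hrank : (X₀ * N).rank = k := by
    rw [← hN, rank_mul_eq_right_of_isUnit_det _ _ ((isUnit_iff_isUnit_det _).1 (hΨinv T)), hX₀]
  exact ⟨N, isUnit_of_rank_mul_eq_card (by simpa using hrank), hN⟩

/-- If the `T`-periodic full-row-rank matrix function `S(t)` annihilates `Ψ(t)·X₀`,
where `Ψ` is the state-transition matrix of a `T`-periodic linear system and `X₀`
has full column rank `k` (with `n = m + k`), then the column span of `X₀` is invariant
under the monodromy matrix `Ψ(T)`: `Ψ(T)·X₀ = X₀·N` for some invertible `N`. -/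
theorem stmt5 {m k : ℕ} (T : ℝ) (hT : 0 < T)
    (A Ψ : ℝ → Matrix (Fin (m + k)) (Fin (m + k)) ℝ)
    (hAcont : Continuous A) (hAper : ∀ t, A (t + T) = A t)
    (hΨ0 : Ψ 0 = 1) (hΨinv : ∀ t, IsUnit (Ψ t))
    (hΨ : ∀ t, HasDerivAt Ψ (A t * Ψ t) t)
    (X₀ : Matrix (Fin (m + k)) (Fin k) ℝ) (hX₀ : X₀.rank = k)
    (S : ℝ → Matrix (Fin m) (Fin (m + k)) ℝ)
    (hSper : ∀ t, S (t + T) = S t) (hSrank : ∀ t, (S t).rank = m)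
    (hannih : ∀ t, S t * Ψ t * X₀ = 0) :
    ∃ N : Matrix (Fin k) (Fin k) ℝ, IsUnit N ∧ Ψ T * X₀ = X₀ * N :=
  stmt5_general T Ψ hΨ0 hΨinv X₀ hX₀ S hSper hSrank hannih
end

section
/- Let V be a real vector space of finite dimension n and let f : V → V be a linear map. (i) For every even natural number d with d < n there exists an f-invariant subspace of V of dimension d. (ii) If n ≥ 2, then there exists an f-invariant subspace of V of odd dimension d with d < n if and only if f has a real eigenvalue. -/
/-!
A real polynomial without real roots has even degree, since its irreducible factors are
quadratic. Applied to the characteristic polynomial, this shows that an endomorphism of an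
odd-dimensional space has an eigenvalue, which gives (ii) after restricting `f` to an
odd-dimensional invariant subspace; conversely an eigenvector spans an invariant line.

For (i) induct on `dim V`. If `f` has an eigenvalue `μ`, every hyperplane containing the range of
`f - μ` is invariant, and we recurse inside such a hyperplane. Otherwise a monic quadratic factor
`q` of the minimal polynomial gives a vector `v ≠ 0` with `q(f) v = 0`, so `span {v, f v}` is an
invariant plane, and we recurse in the quotient by it.
-/

open Module Polynomial

namespace Real

theorem even_natDegree_of_forall_not_isRoot {p : ℝ[X]} (hp : ∀ x, ¬ p.IsRoot x) :
    Even p.natDegree := by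
  induction p using WfDvdMonoid.induction_on_irreducible with
  | zero => simp
  | unit u hu => simp [natDegree_eq_zero_of_isUnit hu]
  | mul a q ha hq ih =>
    have hq_two : q.natDegree = 2 := by
      have hq_ne_one : q.natDegree ≠ 1 := fun h ↦ by
        obtain ⟨x, hx⟩ := exists_root_of_degree_eq_one
          ((degree_eq_iff_natDegree_eq_of_pos one_pos).mpr h)
        exact hp x (by simp [IsRoot, hx.eq_zero])
      have := hq.natDegree_pos
      have := hq.natDegree_le_two
      omega
    rw [natDegree_mul hq.ne_zero ha, hq_two]
    exact even_two.add (ih fun x hx ↦ hp x (by simp [IsRoot, hx.eq_zero]))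

theorem exists_isRoot_of_odd_natDegree {p : ℝ[X]} (hp : Odd p.natDegree) : ∃ x, p.IsRoot x := by
  by_contra! h
  exact Nat.not_even_iff_odd.mpr hp (even_natDegree_of_forall_not_isRoot h)

end Real

theorem Submodule.finrank_comap_mkQ {K V : Type*} [Field K] [AddCommGroup V] [Module K V]
    [FiniteDimensional K V] (p : Submodule K V) (s : Submodule K (V ⧸ p)) :
    finrank K (s.comap p.mkQ) = finrank K s + finrank K p := by
  have h := LinearMap.finrank_range_add_finrank_ker (p.mkQ.domRestrict (s.comap p.mkQ))
  rwa [LinearMap.range_domRestrict, map_comap_eq_of_surjective p.mkQ_surjective,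
    LinearMap.ker_domRestrict, ker_mkQ,
    (comapSubtypeEquivOfLe ((ker_mkQ p).ge.trans (LinearMap.ker_le_comap _))).finrank_eq,
    eq_comm] at h

namespace Module.End

section Field

variable {K V : Type*} [Field K] [AddCommGroup V] [Module K V]

theorem exists_hasEigenvalue_iff {f : End K V} :
    (∃ μ, f.HasEigenvalue μ) ↔ ∃ (μ : K) (v : V), v ≠ 0 ∧ f v = μ • v := by
  refine exists_congr fun μ ↦ ⟨fun h ↦ ?_, fun ⟨v, hv, hfv⟩ ↦ ?_⟩
  · obtain ⟨v, hv⟩ := h.exists_hasEigenvector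
    exact ⟨v, hv.2, hv.apply_eq_smul⟩
  · exact hasEigenvalue_of_hasEigenvector ⟨mem_eigenspace_iff.mpr hfv, hv⟩

theorem HasEigenvalue.of_restrict {f : End K V} {p : Submodule K V} (hp : ∀ x ∈ p, f x ∈ p)
    {μ : K} (h : HasEigenvalue (f.restrict hp) μ) : f.HasEigenvalue μ := by
  refine ne_bot_of_le_ne_bot ?_ (eigenspace_restrict_le_eigenspace f hp μ)
  rw [Ne, ← Submodule.map_bot p.subtype]
  exact (Submodule.map_injective_of_injective p.injective_subtype).ne h

theorem span_singleton_mem_invtSubmodule {f : End K V} {μ : K} {v : V} (hv : f v = μ • v) :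
    K ∙ v ∈ f.invtSubmodule := by
  intro x hx
  obtain ⟨c, rfl⟩ := Submodule.mem_span_singleton.mp hx
  simp [hv, Submodule.mem_span_singleton, smul_smul]

theorem exists_hasEigenvalue_of_mem_invtSubmodule_of_finrank_eq_one {f : End K V}
    {p : Submodule K V} (hp : p ∈ f.invtSubmodule) (h : finrank K p = 1) :
    ∃ μ, f.HasEigenvalue μ := by
  obtain ⟨⟨v, hvp⟩, hv, hspan⟩ := finrank_eq_one_iff'.mp h
  obtain ⟨μ, hμ⟩ := hspan ⟨f v, hp hvp⟩
  exact exists_hasEigenvalue_iff.mpr ⟨μ, v, by simpa using hv, by simpa using hμ.symm⟩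

theorem span_pair_mem_invtSubmodule {f : End K V} {q : K[X]} (hq : q.IsMonicOfDegree 2) {v : V}
    (hv : aeval f q v = 0) : Submodule.span K {v, f v} ∈ f.invtSubmodule := by
  obtain ⟨a, b, rfl⟩ := isMonicOfDegree_two_iff.mp hq
  have hffv : f (f v) = -a • f v - b • v := by
    simp only [map_add, map_mul, aeval_C, aeval_X, LinearMap.add_apply, Module.End.mul_apply,
      pow_two, algebraMap_end_apply] at hv
    linear_combination (norm := module) hv
  rw [mem_invtSubmodule, Submodule.span_le]
  rintro x (rfl | rfl)
  · exact Submodule.subset_span (by simp)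
  · rw [SetLike.mem_coe, Submodule.mem_comap, hffv]
    exact Submodule.sub_mem _ (Submodule.smul_mem _ _ (Submodule.subset_span (by simp)))
      (Submodule.smul_mem _ _ (Submodule.subset_span (by simp)))

theorem mem_invtSubmodule_of_range_le {f : End K V} {μ : K} {p : Submodule K V}
    (h : LinearMap.range (f - μ • 1) ≤ p) : p ∈ f.invtSubmodule := by
  intro x hx
  have : f x = (f - μ • 1) x + μ • x := by simp
  rw [Submodule.mem_comap, this]
  exact p.add_mem (h ⟨x, rfl⟩) (p.smul_mem μ hx)

theorem comap_mkQ_mem_invtSubmodule {f : End K V} {p : Submodule K V} (hp : p ∈ f.invtSubmodule)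
    {s : Submodule K (V ⧸ p)} (hs : s ∈ invtSubmodule (p.mapQ p f hp)) :
    s.comap p.mkQ ∈ f.invtSubmodule :=
  fun _ hx ↦ hs hx

variable [FiniteDimensional K V]

theorem HasEigenvalue.exists_mem_invtSubmodule_finrank_add_one {f : End K V} {μ : K}
    (hμ : f.HasEigenvalue μ) : ∃ H ∈ f.invtSubmodule, finrank K H + 1 = finrank K V := by
  have hker : LinearMap.ker (f - μ • 1) ≠ ⊥ := by
    rwa [hasEigenvalue_iff, eigenspace_def] at hμ
  have hrange : LinearMap.range (f - μ • 1) < ⊤ := by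
    rw [lt_top_iff_ne_top, Ne, LinearMap.range_eq_top, ← LinearMap.injective_iff_surjective,
      ← LinearMap.ker_eq_bot]
    exact hker
  obtain ⟨φ, hφ, hφrange⟩ := Submodule.exists_dual_map_eq_bot_of_lt_top hrange inferInstance
  exact ⟨LinearMap.ker φ,
    mem_invtSubmodule_of_range_le (μ := μ) (Submodule.map_le_iff_le_comap.mp hφrange.le),
    Dual.finrank_ker_add_one_of_ne_zero hφ⟩

end Field

variable {V : Type*} [AddCommGroup V] [Module ℝ V] [FiniteDimensional ℝ V]

theorem exists_hasEigenvalue_of_odd_finrank (f : End ℝ V) (h : Odd (finrank ℝ V)) :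
    ∃ μ, f.HasEigenvalue μ := by
  obtain ⟨μ, hμ⟩ := Real.exists_isRoot_of_odd_natDegree (p := f.charpoly)
    (by rwa [LinearMap.charpoly_natDegree])
  exact ⟨μ, (hasEigenvalue_iff_isRoot_charpoly f μ).mpr hμ⟩

theorem exists_mem_invtSubmodule_finrank_eq_two [Nontrivial V] {f : End ℝ V}
    (hf : ∀ μ, ¬ f.HasEigenvalue μ) : ∃ p ∈ f.invtSubmodule, finrank ℝ p = 2 := by
  have hint : IsIntegral ℝ f := Algebra.IsIntegral.isIntegral f
  have hdeg : 2 ≤ (minpoly ℝ f).natDegree := by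
    have hne : (minpoly ℝ f).natDegree ≠ 1 := fun h ↦ by
      obtain ⟨μ, hμ⟩ := exists_root_of_degree_eq_one
        ((degree_eq_iff_natDegree_eq_of_pos one_pos).mpr h)
      exact hf μ (hasEigenvalue_of_isRoot hμ)
    have := minpoly.natDegree_pos hint
    omega
  obtain ⟨q, r, hq, hr, hqr⟩ := IsMonicOfDegree.eq_isMonicOfDegree_two_mul_isMonicOfDegree
    (n := (minpoly ℝ f).natDegree - 2) ⟨by omega, minpoly.monic hint⟩
  have hr_ne : aeval f r ≠ 0 := minpoly.aeval_ne_zero_of_dvdNotUnit_minpoly hint hr.monic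
    ⟨hr.ne_zero, q, not_isUnit_of_natDegree_pos q (by simp [hq.natDegree_eq]), by
      rw [hqr, mul_comm]⟩
  obtain ⟨v, hv, hqv⟩ : ∃ v ≠ 0, aeval f q v = 0 := by
    obtain ⟨w, hw⟩ : ∃ w, aeval f r w ≠ 0 := by
      by_contra! h
      exact hr_ne (LinearMap.ext h)
    refine ⟨aeval f r w, hw, ?_⟩
    rw [← Module.End.mul_apply, ← map_mul, ← hqr, minpoly.aeval, LinearMap.zero_apply]
  have hinv := span_pair_mem_invtSubmodule hq hqv
  refine ⟨_, hinv, ?_⟩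
  have hle : finrank ℝ (Submodule.span ℝ {v, f v}) ≤ 2 := by
    classical
    have := (finrank_span_finset_le_card (R := ℝ) ({v, f v} : Finset V)).trans Finset.card_le_two
    rwa [Finset.coe_pair] at this
  have hne_zero : finrank ℝ (Submodule.span ℝ {v, f v}) ≠ 0 := by
    rw [Ne, Submodule.finrank_eq_zero, Submodule.span_eq_bot]
    exact fun h ↦ hv (h v (by simp))
  have hne_one : finrank ℝ (Submodule.span ℝ {v, f v}) ≠ 1 := fun h ↦ by
    obtain ⟨μ, hμ⟩ := exists_hasEigenvalue_of_mem_invtSubmodule_of_finrank_eq_one hinv h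
    exact hf μ hμ
  omega

theorem exists_mem_invtSubmodule_finrank_eq_of_even (f : End ℝ V) {d : ℕ} (hd : Even d)
    (hdn : d ≤ finrank ℝ V) : ∃ W ∈ f.invtSubmodule, finrank ℝ W = d := by
  induction h : finrank ℝ V using Nat.strong_induction_on generalizing V d with
  | _ n ih =>
  by_cases hf : ∃ μ, f.HasEigenvalue μ
  · obtain ⟨μ, hμ⟩ := hf
    obtain rfl | hlt := hdn.eq_or_lt
    · exact ⟨⊤, invtSubmodule.top_mem f, finrank_top ℝ V⟩
    obtain ⟨H, hH, hHrank⟩ := hμ.exists_mem_invtSubmodule_finrank_add_one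
    obtain ⟨W, hW, hWrank⟩ := ih (finrank ℝ H) (by omega) (f.restrict hH) hd (by omega) rfl
    exact ⟨W.map H.subtype, invtSubmodule.map_subtype_mem_of_mem_invtSubmodule f hH hW,
      by rwa [Submodule.finrank_map_subtype_eq]⟩
  · obtain rfl | hd0 := eq_or_ne d 0
    · exact ⟨⊥, invtSubmodule.bot_mem f, finrank_bot ℝ V⟩
    have hd2 : 2 ≤ d := by
      obtain ⟨k, rfl⟩ := hd
      omega
    have : Nontrivial V := (finrank_pos_iff (R := ℝ)).mp (by omega)
    obtain ⟨P, hP, hPrank⟩ := exists_mem_invtSubmodule_finrank_eq_two (not_exists.mp hf)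
    have hquot := P.finrank_quotient_add_finrank
    obtain ⟨S, hS, hSrank⟩ := ih (finrank ℝ (V ⧸ P)) (by omega) (P.mapQ P f hP)
      (hd.tsub even_two) (by omega) rfl
    exact ⟨S.comap P.mkQ, comap_mkQ_mem_invtSubmodule hP hS,
      by rw [Submodule.finrank_comap_mkQ]; omega⟩

end Module.End

/-- Existence of real invariant subspaces for an endomorphism of an `n`-dimensional
real vector space: (i) invariant subspaces of every even dimension `d < n` exist;
(ii) for `n ≥ 2`, an invariant subspace of odd dimension `d < n` exists iff `f` has
a real eigenvalue. -/
theorem stmt9 (V : Type*) [AddCommGroup V] [Module ℝ V] [FiniteDimensional ℝ V]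
    (f : V →ₗ[ℝ] V) :
    (∀ d : ℕ, Even d → d < Module.finrank ℝ V →
      ∃ W : Submodule ℝ V, (∀ x ∈ W, f x ∈ W) ∧ Module.finrank ℝ W = d) ∧
    (2 ≤ Module.finrank ℝ V →
      ((∃ W : Submodule ℝ V, (∀ x ∈ W, f x ∈ W) ∧ Odd (Module.finrank ℝ W) ∧
          Module.finrank ℝ W < Module.finrank ℝ V) ↔
        ∃ (lam : ℝ) (v : V), v ≠ 0 ∧ f v = lam • v)) := by
  refine ⟨fun d hd hdn ↦ Module.End.exists_mem_invtSubmodule_finrank_eq_of_even f hd hdn.le,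
    fun hn ↦ ⟨?_, ?_⟩⟩
  · rintro ⟨W, hW, hodd, -⟩
    obtain ⟨μ, hμ⟩ := Module.End.exists_hasEigenvalue_of_odd_finrank (f.restrict hW) hodd
    exact Module.End.exists_hasEigenvalue_iff.mp ⟨μ, hμ.of_restrict hW⟩
  · rintro ⟨μ, v, hv, hfv⟩
    have hline : finrank ℝ (ℝ ∙ v) = 1 := finrank_span_singleton hv
    exact ⟨ℝ ∙ v, Module.End.span_singleton_mem_invtSubmodule hfv, hline ▸ odd_one,
      by omega⟩
end

section
/- Let α : ℝ → ℝ be continuously differentiable with α(x) ≠ 0 for all x, let β, γ : ℝ → ℝ be continuous, and set δ(x) := β(x) − α′(x). Let U : ℝ → ℝ, and let θ : ℝ → ℝ be twice differentiable and satisfy α(θ(t))·θ″(t) + β(θ(t))·θ′(t)² + γ(θ(t)) = U(t) for all t. Fix θ₀, θ̇₀ ∈ ℝ, define ψ(a, b) := exp(−2·∫ₐᵇ δ(u)/α(u) du), and define I(t) := (1/2)·α(θ(t))²·θ′(t)² − ψ(θ₀, θ(t))·[(1/2)·α(θ₀)²·θ̇₀² − ∫_{θ₀}^{θ(t)} ψ(u,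 θ₀)·α(u)·γ(u) du]. Then I is differentiable and I′(t) = θ′(t)·(α(θ(t))·U(t) − 2·(δ(θ(t))/α(θ(t)))·I(t)) for all t. -/
open intervalIntegral

/-- The integrating factor `ψ(a,b) = exp(−2·∫ₐᵇ δ(u)/α(u) du)` with `δ = β − α′`. -/
noncomputable def psiFactor (α β : ℝ → ℝ) (a b : ℝ) : ℝ :=
  Real.exp (-2 * ∫ u in a..b, (β u - deriv α u) / α u)

/-- The first-integral function `I` associated with the reduced dynamics
`α(θ)θ̈ + β(θ)θ̇² + γ(θ) = 0`. -/
noncomputable def firstIntegral (α β γ θ : ℝ → ℝ) (θ₀ θd₀ : ℝ) (t : ℝ) : ℝ :=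
  (1 / 2) * α (θ t) ^ 2 * deriv θ t ^ 2
    - psiFactor α β θ₀ (θ t) *
      ((1 / 2) * α θ₀ ^ 2 * θd₀ ^ 2 - ∫ u in θ₀..θ t, psiFactor α β u θ₀ * α u * γ u)

/-!
Write `g = δ/α` and split `I(t) = K(t) − P(θ(t))` with kinetic part `K = ½ α(θ)² θ′²` and
`P(x) = ψ(θ₀, x) · (½ α(θ₀)² θ̇₀² − ∫_{θ₀}^x ψ(u, θ₀) α γ)`. Since `∂ₓ ψ(θ₀, x) = −2 g(x) ψ(θ₀, x)` and
`ψ(θ₀, x) ψ(x, θ₀) = 1`, the potential part solves the linear ODE `P′ = −2 g P − α γ`. On the other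
hand the equation of motion gives `K′ = α θ′ (U − γ − δ θ′²)`, and the `α γ θ′` terms cancel in
`K′ − (P ∘ θ)′`, leaving `θ′ (α U − 2 g I)`.
-/

noncomputable def potentialPart (α β γ : ℝ → ℝ) (θ₀ θd₀ x : ℝ) : ℝ :=
  psiFactor α β θ₀ x *
    ((1 / 2) * α θ₀ ^ 2 * θd₀ ^ 2 - ∫ u in θ₀..x, psiFactor α β u θ₀ * α u * γ u)

theorem firstIntegral_eq_sub_potentialPart (α β γ θ : ℝ → ℝ) (θ₀ θd₀ : ℝ) :
    firstIntegral α β γ θ θ₀ θd₀ =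
      fun t => (1 / 2) * α (θ t) ^ 2 * deriv θ t ^ 2 - potentialPart α β γ θ₀ θd₀ (θ t) :=
  rfl

theorem psiFactor_mul_psiFactor_swap (α β : ℝ → ℝ) (a b : ℝ) :
    psiFactor α β a b * psiFactor α β b a = 1 := by
  rw [psiFactor, psiFactor, integral_symm, ← Real.exp_add]
  simp

section

variable {α β : ℝ → ℝ}

theorem hasDerivAt_psiFactor_right (hg : Continuous fun u => (β u - deriv α u) / α u)
    (a x : ℝ) :
    HasDerivAt (psiFactor α β a) (-2 * ((β x - deriv α x) / α x) * psiFactor α β a x) x := by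
  have hint := integral_hasDerivAt_right (hg.intervalIntegrable a x)
    (hg.stronglyMeasurableAtFilter _ _) hg.continuousAt
  refine (hint.const_mul (-2)).exp.congr_deriv ?_
  simp only [psiFactor]
  ring

theorem continuous_psiFactor_left (hg : Continuous fun u => (β u - deriv α u) / α u) (b : ℝ) :
    Continuous fun u => psiFactor α β u b := by
  have hright : Continuous (psiFactor α β b) :=
    continuous_iff_continuousAt.mpr fun x => (hasDerivAt_psiFactor_right hg b x).continuousAt
  have hswap : (fun u => psiFactor α β u b) = fun u => (psiFactor α β b u)⁻¹ :=
    funext fun u => eq_inv_of_mul_eq_one_right (psiFactor_mul_psiFactor_swap α β b u)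
  rw [hswap]
  exact hright.inv₀ fun u => Real.exp_ne_zero _

theorem hasDerivAt_potentialPart {γ : ℝ → ℝ} (hg : Continuous fun u => (β u - deriv α u) / α u)
    (hα : Continuous α) (hγ : Continuous γ) (θ₀ θd₀ x : ℝ) :
    HasDerivAt (potentialPart α β γ θ₀ θd₀)
      (-2 * ((β x - deriv α x) / α x) * potentialPart α β γ θ₀ θd₀ x - α x * γ x) x := by
  have hh : Continuous fun u => psiFactor α β u θ₀ * α u * γ u :=
    ((continuous_psiFactor_left hg θ₀).mul hα).mul hγ
  have hJ := integral_hasDerivAt_right (hh.intervalIntegrable θ₀ x)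
    (hh.stronglyMeasurableAtFilter _ _) hh.continuousAt
  refine ((hasDerivAt_psiFactor_right hg θ₀ x).mul (hJ.const_sub _)).congr_deriv ?_
  simp only [potentialPart]
  linear_combination -(α x * γ x) * psiFactor_mul_psiFactor_swap α β θ₀ x

end

theorem hasDerivAt_kineticPart {α θ : ℝ → ℝ} {t : ℝ} (hα : DifferentiableAt ℝ α (θ t))
    (hθ : DifferentiableAt ℝ θ t) (hθ' : DifferentiableAt ℝ (deriv θ) t) :
    HasDerivAt (fun s => (1 / 2) * α (θ s) ^ 2 * deriv θ s ^ 2)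
      (α (θ t) * deriv θ t *
        (deriv α (θ t) * deriv θ t ^ 2 + α (θ t) * deriv (deriv θ) t)) t := by
  have hαθ : HasDerivAt (fun s => α (θ s)) (deriv α (θ t) * deriv θ t) t :=
    hα.hasDerivAt.comp t hθ.hasDerivAt
  refine (((hαθ.fun_pow 2).const_mul (1 / 2)).mul (hθ'.hasDerivAt.fun_pow 2)).congr_deriv ?_
  ring

/-- Proposition (time derivative of the first integral): along any solution of
`α(θ)θ̈ + β(θ)θ̇² + γ(θ) = U`, the function `I` is differentiable with
`I′ = θ′·(α(θ)·U − 2·(δ(θ)/α(θ))·I)`, where `δ = β − α′`. -/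
theorem stmt11 (α β γ U θ : ℝ → ℝ) (θ₀ θd₀ : ℝ)
    (hα : ContDiff ℝ 1 α) (hα0 : ∀ x, α x ≠ 0)
    (hβ : Continuous β) (hγ : Continuous γ)
    (hθ : Differentiable ℝ θ) (hθ' : Differentiable ℝ (deriv θ))
    (hode : ∀ t, α (θ t) * deriv (deriv θ) t + β (θ t) * deriv θ t ^ 2 + γ (θ t) = U t) :
    ∀ t, HasDerivAt (firstIntegral α β γ θ θ₀ θd₀)
      (deriv θ t * (α (θ t) * U t
        - 2 * ((β (θ t) - deriv α (θ t)) / α (θ t)) * firstIntegral α β γ θ θ₀ θd₀ t)) t := by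
  intro t
  have hg : Continuous fun u => (β u - deriv α u) / α u :=
    (hβ.sub (hα.continuous_deriv le_rfl)).div hα.continuous hα0
  have hK := hasDerivAt_kineticPart (hα.differentiable one_ne_zero (θ t)) (hθ t) (hθ' t)
  have hP := (hasDerivAt_potentialPart hg hα.continuous hγ θ₀ θd₀ (θ t)).comp t (hθ t).hasDerivAt
  rw [firstIntegral_eq_sub_potentialPart]
  refine (hK.sub hP).congr_deriv ?_
  rw [← hode t]
  field_simp [hα0 (θ t)]
  ring
end

section
/- Consider a mechanical system with n_q degrees of freedom and n_q − 1 controls: let M : ℝ^{n_q} → (real n_q×n_q matrices), G : ℝ^{n_q} → ℝ^{n_q}, let C : ℝ^{n_q} × ℝ^{n_q} → (real n_q×n_q matrices) be homogeneous of degree one in its second argument, i.e. C(q, c·v) = c·C(q, v) for all scalars c and vectors q, v, let B̂ be a real n_q×(n_q−1) matrix and let b⊥ ∈ ℝ^{n_q} be a vector with b⊥ᵀ·B̂ = 0 (a left annihilator of B̂). Let Φ : ℝ → ℝ^{n_q} be twice differentiable with derivative Φ′ and second derivative Φ″, let θ : ℝ → ℝ be twice differentiable, set q(t) := Φ(θ(t)),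 and suppose there is û : ℝ → ℝ^{n_q−1} such that M(q(t))·q̈(t) + C(q(t), q̇(t))·q̇(t) + G(q(t)) = B̂·û(t) holds for all t. Then θ satisfies the reduced dynamics α(θ(t))·θ″(t) + β(θ(t))·θ′(t)² + γ(θ(t)) = 0 for all t, where α(x) := b⊥ᵀ·M(Φ(x))·Φ′(x), β(x) := b⊥ᵀ·M(Φ(x))·Φ″(x) + b⊥ᵀ·C(Φ(x), Φ′(x))·Φ′(x), and γ(x) := b⊥ᵀ·G(Φ(x)). -/
open Matrix

theorem dotProduct_mulVec_eq_zero_of_vecMul_eq_zero {R m n : Type*} [CommSemiring R]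
    [Fintype m] [Fintype n] {B : Matrix m n R} {b : m → R} (hb : B.vecMul b = 0) (u : n → R) :
    b ⬝ᵥ B.mulVec u = 0 := by
  rw [dotProduct_mulVec, hb, zero_dotProduct]

-- Along the curve: `v = Φ'(θ)`, `w = Φ''(θ)`, `s = θ'`, `a = θ''`.
theorem reduced_dynamics_of_eom {R m n : Type*} [CommRing R] [Fintype m] [Fintype n]
    (M : Matrix m m R) (C : (m → R) → Matrix m m R)
    (hC : ∀ (c : R) (v : m → R), C (c • v) = c • C v)
    (g v w : m → R) (a s : R) {B : Matrix m n R} {b : m → R} (hb : B.vecMul b = 0) (u : n → R)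
    (heom : M.mulVec (a • v + s ^ 2 • w) + (C (s • v)).mulVec (s • v) + g = B.mulVec u) :
    (b ⬝ᵥ M.mulVec v) * a + (b ⬝ᵥ M.mulVec w + b ⬝ᵥ (C v).mulVec v) * s ^ 2 + b ⬝ᵥ g = 0 := by
  have hproj := congrArg (b ⬝ᵥ ·) heom
  simp only [dotProduct_mulVec_eq_zero_of_vecMul_eq_zero hb, hC, mulVec_add, mulVec_smul,
    smul_mulVec, dotProduct_add, dotProduct_smul, smul_eq_mul] at hproj
  linear_combination hproj

theorem stmt13_general {nq : ℕ}
    (M : (Fin nq → ℝ) → Matrix (Fin nq) (Fin nq) ℝ)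
    (G : (Fin nq → ℝ) → (Fin nq → ℝ))
    (C : (Fin nq → ℝ) → (Fin nq → ℝ) → Matrix (Fin nq) (Fin nq) ℝ)
    (hChom : ∀ (c : ℝ) (q v : Fin nq → ℝ), C q (c • v) = c • C q v)
    (Bhat : Matrix (Fin nq) (Fin (nq - 1)) ℝ)
    (bperp : Fin nq → ℝ) (hann : Bhat.vecMul bperp = 0)
    (Φ : ℝ → Fin nq → ℝ)
    (θ : ℝ → ℝ)
    (uhat : ℝ → Fin (nq - 1) → ℝ)
    (heom : ∀ t,
      (M (Φ (θ t))).mulVec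
          (deriv (deriv θ) t • deriv Φ (θ t) + deriv θ t ^ 2 • deriv (deriv Φ) (θ t))
        + (C (Φ (θ t)) (deriv θ t • deriv Φ (θ t))).mulVec (deriv θ t • deriv Φ (θ t))
        + G (Φ (θ t)) = Bhat.mulVec (uhat t)) :
    ∀ t, (bperp ⬝ᵥ (M (Φ (θ t))).mulVec (deriv Φ (θ t))) * deriv (deriv θ) t
        + (bperp ⬝ᵥ (M (Φ (θ t))).mulVec (deriv (deriv Φ) (θ t))
            + bperp ⬝ᵥ (C (Φ (θ t)) (deriv Φ (θ t))).mulVec (deriv Φ (θ t)))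
          * deriv θ t ^ 2
        + bperp ⬝ᵥ G (Φ (θ t)) = 0 := fun t =>
  reduced_dynamics_of_eom _ _ (hChom · _) _ _ _ _ _ hann _ (heom t)

/-- Reduced dynamics of an underactuated mechanical system with one degree of
underactuation under the virtual holonomic constraint `q = Φ(θ)`: if
`M(q)q̈ + C(q,q̇)q̇ + G(q) = B̂·û` holds along `q(t) = Φ(θ(t))` (with `q̇, q̈` given by
the chain rule) and `b⊥ᵀ·B̂ = 0`, then `α(θ)θ″ + β(θ)θ′² + γ(θ) = 0`, where
`α(x) = b⊥ᵀM(Φ(x))Φ′(x)`, `β(x) = b⊥ᵀM(Φ(x))Φ″(x) + b⊥ᵀC(Φ(x),Φ′(x))Φ′(x)` and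
`γ(x) = b⊥ᵀG(Φ(x))`. -/
theorem stmt13 {nq : ℕ}
    (M : (Fin nq → ℝ) → Matrix (Fin nq) (Fin nq) ℝ)
    (G : (Fin nq → ℝ) → (Fin nq → ℝ))
    (C : (Fin nq → ℝ) → (Fin nq → ℝ) → Matrix (Fin nq) (Fin nq) ℝ)
    (hChom : ∀ (c : ℝ) (q v : Fin nq → ℝ), C q (c • v) = c • C q v)
    (Bhat : Matrix (Fin nq) (Fin (nq - 1)) ℝ)
    (bperp : Fin nq → ℝ) (hann : Bhat.vecMul bperp = 0)
    (Φ : ℝ → Fin nq → ℝ) (hΦ : Differentiable ℝ Φ) (hΦ' : Differentiable ℝ (deriv Φ))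
    (θ : ℝ → ℝ) (hθ : Differentiable ℝ θ) (hθ' : Differentiable ℝ (deriv θ))
    (uhat : ℝ → Fin (nq - 1) → ℝ)
    (heom : ∀ t,
      (M (Φ (θ t))).mulVec
          (deriv (deriv θ) t • deriv Φ (θ t) + deriv θ t ^ 2 • deriv (deriv Φ) (θ t))
        + (C (Φ (θ t)) (deriv θ t • deriv Φ (θ t))).mulVec (deriv θ t • deriv Φ (θ t))
        + G (Φ (θ t)) = Bhat.mulVec (uhat t)) :
    ∀ t, (bperp ⬝ᵥ (M (Φ (θ t))).mulVec (deriv Φ (θ t))) * deriv (deriv θ) t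
        + (bperp ⬝ᵥ (M (Φ (θ t))).mulVec (deriv (deriv Φ) (θ t))
            + bperp ⬝ᵥ (C (Φ (θ t)) (deriv Φ (θ t))).mulVec (deriv Φ (θ t)))
          * deriv θ t ^ 2
        + bperp ⬝ᵥ G (Φ (θ t)) = 0 :=
  stmt13_general M G C hChom Bhat bperp hann Φ θ uhat heom
end

section
/- For every invertible real n×n matrix M there exists a real n×n matrix F such that exp(F) = M·M. (Equivalently, the square of any real invertible matrix admits a real matrix logarithm; applied to the monodromy matrix of a linear T-periodic system, this yields the real matrix F of a real 2T-periodic Floquet–Lyapunov factorization.) -/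
/-!
View `M` as an invertible complex matrix `N`. In a commutative complex Banach algebra the
exponentials form an open set, and so do the units that are not exponentials; if a unit `u` has
finite spectrum, the line `z ↦ (1 - z) • u + z` meets the non-units only finitely often, so a
connected set of units joins `1 = exp 0` to `u`, and `u` is an exponential. Applied in the closed
subalgebra generated by `N` (where `N` keeps its finite spectrum) this gives `exp L = N` with `L`
commuting with everything that commutes with `N`, in particular with `conj L`. As `conj N = N`,
also `exp (conj L) = N`, so the real matrix `F = L + conj L = 2 re L` satisfies `exp F = N * N`.
-/

open NormedSpace Set Topology Pointwise

section NormedRing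

variable {A : Type*} [NormedRing A] [CompleteSpace A]

theorem range_exp_mem_nhds_one (𝕂 : Type*) [RCLike 𝕂] [NormedAlgebra 𝕂 A] :
    range (exp : A → A) ∈ 𝓝 1 := by
  have h := HasStrictFDerivAt.map_nhds_eq_of_equiv (f' := ContinuousLinearEquiv.refl 𝕂 A)
    (hasStrictFDerivAt_exp_zero (𝕂 := 𝕂) (𝔸 := A))
  rw [exp_zero] at h
  exact h ▸ Filter.range_mem_map

theorem Units.smul_range_exp_mem_nhds (𝕂 : Type*) [RCLike 𝕂] [NormedAlgebra 𝕂 A] (v : Aˣ) :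
    v • range (exp : A → A) ∈ 𝓝 (v : A) := by
  have h := (smul_mem_nhds_smul_iff (α := A) (a := 1) v).2 (range_exp_mem_nhds_one 𝕂)
  rwa [← mul_one (v : A)]

end NormedRing

section NormedCommRing

variable {A : Type*} [NormedCommRing A] [CompleteSpace A]

theorem isOpen_range_exp (𝕂 : Type*) [RCLike 𝕂] [NormedAlgebra 𝕂 A] :
    IsOpen (range (exp : A → A)) := by
  let +nondep : NormedAlgebra ℚ A := .restrictScalars ℚ 𝕂 A
  refine isOpen_iff_mem_nhds.2 ?_
  rintro _ ⟨b, rfl⟩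
  filter_upwards [(isUnit_exp b).unit.smul_range_exp_mem_nhds 𝕂]
  rintro _ ⟨_, ⟨c, rfl⟩, rfl⟩
  exact ⟨b + c, exp_add⟩

theorem isOpen_setOf_isUnit_and_notMem_range_exp (𝕂 : Type*) [RCLike 𝕂] [NormedAlgebra 𝕂 A] :
    IsOpen {x : A | IsUnit x ∧ x ∉ range exp} := by
  let +nondep : NormedAlgebra ℚ A := .restrictScalars ℚ 𝕂 A
  refine isOpen_iff_mem_nhds.2 ?_
  rintro _ ⟨⟨v, rfl⟩, hv⟩
  filter_upwards [v.smul_range_exp_mem_nhds 𝕂]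
  rintro _ ⟨_, ⟨c, rfl⟩, rfl⟩
  refine ⟨v.isUnit.mul (isUnit_exp c), ?_⟩
  rintro ⟨d, hd⟩
  refine hv ⟨d + -c, ?_⟩
  simp only [smul_eq_mul] at hd
  rw [exp_add, hd, mul_assoc, ← exp_add, add_neg_cancel, exp_zero, mul_one]

end NormedCommRing

theorem finite_setOf_not_isUnit_smul_add_algebraMap {𝕜 A : Type*} [Field 𝕜] [Ring A]
    [Algebra 𝕜 A] {u : A} (hσ : (spectrum 𝕜 u).Finite) :
    {z : 𝕜 | ¬IsUnit ((1 - z) • u + algebraMap 𝕜 A z)}.Finite := by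
  refine (hσ.image fun w => w / (w - 1)).subset fun z hz => ?_
  have hz1 : z - 1 ≠ 0 := by
    rintro h
    rw [sub_eq_zero] at h
    subst h
    simp at hz
  refine ⟨z / (z - 1), fun h => hz ?_, by field_simp; ring⟩
  have hfactor :
      (1 - z) • u + algebraMap 𝕜 A z = (z - 1) • (algebraMap 𝕜 A (z / (z - 1)) - u) := by
    rw [Algebra.algebraMap_eq_smul_one, Algebra.algebraMap_eq_smul_one, smul_sub, smul_smul,
      mul_div_cancel₀ _ hz1]
    module
  rw [hfactor, Algebra.smul_def]
  exact ((isUnit_iff_ne_zero.2 hz1).map _).mul (spectrum.mem_resolventSet_iff.mp h)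

theorem exists_exp_eq_of_isUnit_of_finite_spectrum {A : Type*} [NormedCommRing A]
    [NormedAlgebra ℂ A] [CompleteSpace A] {u : A} (hu : IsUnit u)
    (hσ : (spectrum ℂ u).Finite) : ∃ b, exp b = u := by
  set f : ℂ → A := fun z => (1 - z) • u + algebraMap ℂ A z
  have hf : Continuous f := by fun_prop
  have hconn : IsPreconnected {z | IsUnit (f z)} := by
    have h := (finite_setOf_not_isUnit_smul_add_algebraMap hσ).countable
      |>.isConnected_compl_of_one_lt_rank (by simp [Complex.rank_real_complex])
    simpa only [compl_ofPred, not_not] using h.isPreconnected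
  by_contra hne
  obtain ⟨z, -, hzExp, -, hzNotExp⟩ := hconn _ _ ((isOpen_range_exp ℂ).preimage hf)
    ((isOpen_setOf_isUnit_and_notMem_range_exp ℂ).preimage hf)
    (fun z hz => (em (f z ∈ range exp)).imp id fun h => ⟨hz, h⟩)
    ⟨1, by simp [f], ⟨0, by simp [f]⟩⟩ ⟨0, by simpa [f] using hu, by simpa [f, hu] using hne⟩
  exact hzNotExp hzExp

namespace Matrix

variable {n : Type*} [Fintype n] [DecidableEq n]

theorem map_exp {α β : Type*} [NormedRing α] [NormedAlgebra ℚ α] [CompleteSpace α] [NormedRing β]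
    [NormedAlgebra ℚ β] (f : α →+* β) (hf : Continuous f) (A : Matrix n n α) :
    (exp A).map f = exp (A.map f) := by
  let _ : NormedRing (Matrix n n α) := Matrix.linftyOpNormedRing
  let _ : NormedAlgebra ℚ (Matrix n n α) := Matrix.linftyOpNormedAlgebra
  let _ : NormedRing (Matrix n n β) := Matrix.linftyOpNormedRing
  let _ : NormedAlgebra ℚ (Matrix n n β) := Matrix.linftyOpNormedAlgebra
  -- the operator-norm uniformity is the entrywise one, but only up to unfolding
  have : @CompleteSpace (Matrix n n α) PseudoMetricSpace.toUniformSpace :=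
    instCompleteSpace n n α
  exact NormedSpace.map_exp f.mapMatrix (continuous_id.matrix_map hf) A

theorem exists_mem_elemental_exp_eq {N : Matrix n n ℂ} (hN : IsUnit N) :
    ∃ L ∈ Algebra.elemental ℂ N, exp L = N := by
  let _ : NormedRing (Matrix n n ℂ) := Matrix.linftyOpNormedRing
  let _ : NormedAlgebra ℂ (Matrix n n ℂ) := Matrix.linftyOpNormedAlgebra
  let B := Algebra.elemental ℂ N
  let _ : NormedCommRing B := { SubringClass.toNormedRing B with mul_comm := mul_comm }
  let +nondep : NormedAlgebra ℚ B := .restrictScalars ℚ ℂ B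
  have : @CompleteSpace (Matrix n n ℂ) PseudoMetricSpace.toUniformSpace :=
    instCompleteSpace n n ℂ
  have : CompleteSpace B := (Algebra.elemental.isClosed ℂ N).completeSpace_coe
  let x : B := ⟨N, Algebra.elemental.self_mem ℂ N⟩
  have hσ : spectrum ℂ x = spectrum ℂ N :=
    Subalgebra.spectrum_eq_of_isPreconnected_compl (hS := Algebra.elemental.isClosed ℂ N) B x
      (N.finite_spectrum.countable.isConnected_compl_of_one_lt_rank (by simp)).isPreconnected
  have hx : IsUnit x := by
    rwa [← spectrum.zero_notMem_iff ℂ, hσ, spectrum.zero_notMem_iff]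
  obtain ⟨b, hb⟩ := exists_exp_eq_of_isUnit_of_finite_spectrum hx (hσ ▸ N.finite_spectrum)
  exact ⟨b, b.2, (NormedSpace.map_exp B.val continuous_subtype_val b).symm.trans congr(($hb).1)⟩

theorem commute_map_conj_of_mem_elemental {N L : Matrix n n ℂ} (hN : N.map (starRingEnd ℂ) = N)
    (hL : L ∈ Algebra.elemental ℂ N) : Commute L (L.map (starRingEnd ℂ)) := by
  have hcent := Algebra.elemental.le_centralizer_centralizer ℂ N hL
  rw [Subalgebra.mem_centralizer_iff] at hcent
  have hLN : N * L = L * N := hcent N (by simp [Set.mem_centralizer_iff])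
  refine (hcent _ ?_).symm
  simp only [Subalgebra.coe_centralizer, Set.mem_centralizer_iff, Set.mem_singleton_iff, forall_eq]
  rw [← hN, ← Matrix.map_mul, ← Matrix.map_mul, hLN]

theorem exists_exp_eq_mul_self {M : Matrix n n ℝ} (hM : IsUnit M) :
    ∃ F : Matrix n n ℝ, exp F = M * M := by
  set N := M.map Complex.ofRealHom
  have hN : N.map (starRingEnd ℂ) = N := by ext; simp [N]
  obtain ⟨L, hL, hLexp⟩ := exists_mem_elemental_exp_eq (N := N) (hM.map Complex.ofRealHom.mapMatrix)
  have hLexp' : exp (L.map (starRingEnd ℂ)) = N := by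
    rw [← map_exp _ Complex.continuous_conj, hLexp, hN]
  set F : Matrix n n ℝ := (2 : ℝ) • L.map Complex.re
  have hF : F.map Complex.ofRealHom = L + L.map (starRingEnd ℂ) := by
    ext; simp [F, Complex.add_conj]
  refine ⟨F, map_injective (f := ⇑Complex.ofRealHom) Complex.ofReal_injective ?_⟩
  dsimp only
  rw [map_exp _ Complex.continuous_ofReal, hF,
    exp_add_of_commute _ _ (commute_map_conj_of_mem_elemental hN hL), hLexp, hLexp',
    Matrix.map_mul]

end Matrix

/-- The square of any invertible real matrix admits a real matrix logarithm:
there is a real matrix `F` with `exp(F) = M·M`. -/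
theorem stmt14 {n : ℕ} (M : Matrix (Fin n) (Fin n) ℝ) (hM : IsUnit M) :
    ∃ F : Matrix (Fin n) (Fin n) ℝ, NormedSpace.exp F = M * M :=
  Matrix.exists_exp_eq_mul_self hM
end

section
/- Let a, g ∈ ℝ and let θ : ℝ → ℝ be twice differentiable and satisfy, for all t, the reduced cart-pendulum dynamics (1 − a·cos²(θ(t)))·θ″(t) + a·cos(θ(t))·sin(θ(t))·θ′(t)² − g·sin(θ(t)) = 0. Then for all t, (1/2)·(1 − a·cos²(θ(t)))·[(1 − a·cos²(θ(t)))·θ′(t)² − (1 − a·cos²(θ(0)))·θ′(0)² + 2·g·(cos(θ(t)) − cos(θ(0)))] = 0; in particular the quantity (1 − a·cos²(θ(t)))·θ′(t)² + 2·g·cos(θ(t)) is constant along solutions. -/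
/-!
Multiplying the equation of motion by `2θ′` turns its left-hand side into the time derivative of
`(1 − a·cos²θ)·θ′² + 2g·cosθ`, so this quantity is conserved; the vanishing of `I` is then a
multiple of the conservation law.
-/

open Real

namespace CartPendulum

noncomputable def energy (a g θ ω : ℝ) : ℝ :=
  (1 - a * cos θ ^ 2) * ω ^ 2 + 2 * g * cos θ

theorem hasDerivAt_energy_comp (a g : ℝ) {θ ω : ℝ → ℝ} {θ' ω' t : ℝ}
    (hθ : HasDerivAt θ θ' t) (hω : HasDerivAt ω ω' t) :
    HasDerivAt (fun s => energy a g (θ s) (ω s))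
      (2 * a * cos (θ t) * sin (θ t) * θ' * ω t ^ 2
        + 2 * (1 - a * cos (θ t) ^ 2) * ω t * ω' - 2 * g * sin (θ t) * θ') t := by
  have h := ((((hθ.cos.pow 2).const_mul a).const_sub 1).mul (hω.pow 2)).add
    (hθ.cos.const_mul (2 * g))
  refine h.congr_deriv ?_
  simp only [Pi.pow_apply]
  push_cast
  ring

theorem energy_eq_of_ode {a g : ℝ} {θ : ℝ → ℝ}
    (hθ : Differentiable ℝ θ) (hθ' : Differentiable ℝ (deriv θ))
    (hode : ∀ t, (1 - a * cos (θ t) ^ 2) * deriv (deriv θ) t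
      + a * cos (θ t) * sin (θ t) * deriv θ t ^ 2 - g * sin (θ t) = 0) (t s : ℝ) :
    energy a g (θ t) (deriv θ t) = energy a g (θ s) (deriv θ s) := by
  have hderiv : ∀ x, HasDerivAt (fun s => energy a g (θ s) (deriv θ s)) 0 x := fun x => by
    refine (hasDerivAt_energy_comp a g (hθ x).hasDerivAt (hθ' x).hasDerivAt).congr_deriv ?_
    linear_combination (2 * deriv θ x) * hode x
  exact is_const_of_deriv_eq_zero (fun x => (hderiv x).differentiableAt)
    (fun x => (hderiv x).deriv) t s

end CartPendulum

/-- First integral of the reduced cart-pendulum dynamics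
`(1 − a·cos²θ)θ″ + a·cosθ·sinθ·θ′² − g·sinθ = 0`: the quantity
`(1 − a·cos²θ)θ′² + 2g·cosθ` is constant along solutions, and the associated
function `I` vanishes identically. -/
theorem stmt15 (a g : ℝ) (θ : ℝ → ℝ)
    (hθ : Differentiable ℝ θ) (hθ' : Differentiable ℝ (deriv θ))
    (hode : ∀ t, (1 - a * cos (θ t) ^ 2) * deriv (deriv θ) t
      + a * cos (θ t) * sin (θ t) * deriv θ t ^ 2 - g * sin (θ t) = 0) :
    (∀ t, (1 / 2) * (1 - a * cos (θ t) ^ 2) *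
        ((1 - a * cos (θ t) ^ 2) * deriv θ t ^ 2
          - (1 - a * cos (θ 0) ^ 2) * deriv θ 0 ^ 2
          + 2 * g * (cos (θ t) - cos (θ 0))) = 0) ∧
    (∀ t, (1 - a * cos (θ t) ^ 2) * deriv θ t ^ 2 + 2 * g * cos (θ t)
        = (1 - a * cos (θ 0) ^ 2) * deriv θ 0 ^ 2 + 2 * g * cos (θ 0)) := by
  have hconst : ∀ t, (1 - a * cos (θ t) ^ 2) * deriv θ t ^ 2 + 2 * g * cos (θ t)
      = (1 - a * cos (θ 0) ^ 2) * deriv θ 0 ^ 2 + 2 * g * cos (θ 0) :=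
    fun t => CartPendulum.energy_eq_of_ode hθ hθ' hode t 0
  exact ⟨fun t => by linear_combination (1 / 2) * (1 - a * cos (θ t) ^ 2) * hconst t, hconst⟩
end

section
/- Let a, g ∈ ℝ and let θ : ℝ → ℝ be twice differentiable satisfying, for all t, (1 − a·cos²(θ(t)))·θ″(t) + a·cos(θ(t))·sin(θ(t))·θ′(t)² − g·sin(θ(t)) = 0. Define x_c(t) := −a·sin(θ(t)), φ(t) := θ(t) and u_f(t) := (1 − 2a)·cos(θ(t))·θ″(t) + (2a − 1)·sin(θ(t))·θ′(t)². Then the pair (x_c, φ) satisfies the nominal cart-pendulum equations of motion: 2·x_c″(t) + cos(φ(t))·φ″(t) − sin(φ(t))·φ′(t)² = u_f(t) and φ″(t) + cos(φ(t))·x_c″(t) − g·sin(φ(t)) = 0 for all t. -/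
open Real

theorem deriv_const_mul_sin_comp (c : ℝ) {θ : ℝ → ℝ} (hθ : Differentiable ℝ θ) :
    deriv (fun τ => c * sin (θ τ)) = fun t => c * (cos (θ t) * deriv θ t) :=
  funext fun t => ((hθ t).hasDerivAt.sin.const_mul c).deriv

theorem deriv_deriv_const_mul_sin_comp (c : ℝ) {θ : ℝ → ℝ} (hθ : Differentiable ℝ θ)
    {t : ℝ} (hθ' : DifferentiableAt ℝ (deriv θ) t) :
    deriv (deriv (fun τ => c * sin (θ τ))) t
      = c * (cos (θ t) * deriv (deriv θ) t - sin (θ t) * deriv θ t ^ 2) := by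
  rw [deriv_const_mul_sin_comp c hθ]
  have h : HasDerivAt (fun τ => c * (cos (θ τ) * deriv θ τ))
      (c * (-sin (θ t) * deriv θ t * deriv θ t + cos (θ t) * deriv (deriv θ) t)) t :=
    ((hθ t).hasDerivAt.cos.mul hθ'.hasDerivAt).const_mul c
  rw [h.deriv]
  ring

/-- Any solution of the reduced dynamics of the cart-pendulum, together with the
virtual constraint `x_c = −a·sin(θ)`, `φ = θ`, and the nominal input
`u_f = (1−2a)·cos(θ)·θ″ + (2a−1)·sin(θ)·θ′²`, satisfies the nominal cart-pendulum
equations of motion. -/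
theorem stmt16 (a g : ℝ) (θ : ℝ → ℝ)
    (hθ : Differentiable ℝ θ) (hθ' : Differentiable ℝ (deriv θ))
    (hode : ∀ t, (1 - a * cos (θ t) ^ 2) * deriv (deriv θ) t
      + a * cos (θ t) * sin (θ t) * deriv θ t ^ 2 - g * sin (θ t) = 0) :
    ∀ t,
      (2 * deriv (deriv (fun τ => -a * sin (θ τ))) t
          + cos (θ t) * deriv (deriv θ) t - sin (θ t) * deriv θ t ^ 2
        = (1 - 2 * a) * cos (θ t) * deriv (deriv θ) t
          + (2 * a - 1) * sin (θ t) * deriv θ t ^ 2) ∧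
      (deriv (deriv θ) t + cos (θ t) * deriv (deriv (fun τ => -a * sin (θ τ))) t
          - g * sin (θ t) = 0) := by
  intro t
  rw [deriv_deriv_const_mul_sin_comp (-a) hθ (hθ' t)]
  exact ⟨by ring, by linear_combination hode t⟩
end

section
/- Let a, g ∈ ℝ and let x_c, φ : ℝ → ℝ be twice differentiable functions satisfying, for all t, the nominal cart-pendulum equations 2·x_c″(t) + cos(φ(t))·φ″(t) − sin(φ(t))·φ′(t)² = u_f(t) and φ″(t) + cos(φ(t))·x_c″(t) − g·sin(φ(t)) = 0, where the input is given by the feedback transformation u_f(t) = [sin(φ(t))·(2a − 1)/(1 − a·cos²(φ(t)))]·(φ′(t)² − g·cos(φ(t))) + [(1 + sin²(φ(t)))/(1 − a·cos²(φ(t)))]·u(t) for some function u : ℝ → ℝ, and assume 1 − a·cos²(φ(t)) ≠ 0 for all t. Then the function y(t) := x_c(t) + a·sin(φ(t)) satisfies y″(t) = u(t) for all t; that is, the feedback transformation is partially feedback linearizing. -/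
/-!
Eliminating `φ̈` with the second equation of motion turns the first into
`(1 + sin² φ) ẍ_c = u_f + sin φ (φ̇² - g cos φ)` (the factor `1 + sin² φ = 2 - cos² φ` is the
determinant of the mass matrix), while `ÿ = (1 - a cos² φ) ẍ_c - a sin φ (φ̇² - g cos φ)`.
Since `(2a - 1) + (1 - a cos² φ) = a (1 + sin² φ)`, the feedback transformation cancels the
drift term exactly and leaves `ÿ = u`.
-/

open Real

theorem deriv_add_const_mul_sin_comp {x φ : ℝ → ℝ} (hx : Differentiable ℝ x)
    (hφ : Differentiable ℝ φ) (a : ℝ) :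
    deriv (fun τ => x τ + a * sin (φ τ)) = fun s => deriv x s + a * (cos (φ s) * deriv φ s) :=
  funext fun s => ((hx s).hasDerivAt.add ((hφ s).hasDerivAt.sin.const_mul a)).deriv

theorem deriv_deriv_add_const_mul_sin_comp {x φ : ℝ → ℝ} (hx : Differentiable ℝ x)
    (hx' : Differentiable ℝ (deriv x)) (hφ : Differentiable ℝ φ)
    (hφ' : Differentiable ℝ (deriv φ)) (a t : ℝ) :
    deriv (deriv (fun τ => x τ + a * sin (φ τ))) t =
      deriv (deriv x) t + a * (cos (φ t) * deriv (deriv φ) t - sin (φ t) * deriv φ t ^ 2) := by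
  rw [deriv_add_const_mul_sin_comp hx hφ a]
  exact ((hx' t).hasDerivAt.add
    (((hφ t).hasDerivAt.cos.mul (hφ' t).hasDerivAt).const_mul a)).deriv.trans (by ring)

theorem cartPendulum_transverse_accel_eq {a g s c w X P u : ℝ} (hsc : s ^ 2 + c ^ 2 = 1)
    (hden : 1 - a * c ^ 2 ≠ 0)
    (heom1 : 2 * X + c * P - s * w ^ 2
      = (s * (2 * a - 1) / (1 - a * c ^ 2)) * (w ^ 2 - g * c)
        + ((1 + s ^ 2) / (1 - a * c ^ 2)) * u)
    (heom2 : P + c * X - g * s = 0) :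
    X + a * (c * P - s * w ^ 2) = u := by
  have hP : P = g * s - c * X := by linarith
  subst hP
  have hmass : (1 : ℝ) + s ^ 2 ≠ 0 := by positivity
  rw [div_mul_eq_mul_div, div_mul_eq_mul_div, ← add_div, eq_div_iff hden] at heom1
  have hX : (1 + s ^ 2) * (X * (1 - a * c ^ 2) - a * s * (w ^ 2 - g * c) - u) = 0 := by
    linear_combination heom1 + (X * (1 - a * c ^ 2) - a * s * (w ^ 2 - g * c)) * hsc
  linear_combination (mul_eq_zero.mp hX).resolve_left hmass

/-- Partial feedback linearization of the cart-pendulum: under the nominal equations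
of motion with the feedback-transformed input `u_f`, the transverse coordinate
`y = x_c + a·sin(φ)` satisfies `y″ = u`. -/
theorem stmt17 (a g : ℝ) (xc φ u : ℝ → ℝ)
    (hxc : Differentiable ℝ xc) (hxc' : Differentiable ℝ (deriv xc))
    (hφ : Differentiable ℝ φ) (hφ' : Differentiable ℝ (deriv φ))
    (hden : ∀ t, 1 - a * cos (φ t) ^ 2 ≠ 0)
    (heom1 : ∀ t, 2 * deriv (deriv xc) t + cos (φ t) * deriv (deriv φ) t
      - sin (φ t) * deriv φ t ^ 2
      = (sin (φ t) * (2 * a - 1) / (1 - a * cos (φ t) ^ 2))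
          * (deriv φ t ^ 2 - g * cos (φ t))
        + ((1 + sin (φ t) ^ 2) / (1 - a * cos (φ t) ^ 2)) * u t)
    (heom2 : ∀ t, deriv (deriv φ) t + cos (φ t) * deriv (deriv xc) t
      - g * sin (φ t) = 0) :
    ∀ t, deriv (deriv (fun τ => xc τ + a * sin (φ τ))) t = u t := by
  intro t
  rw [deriv_deriv_add_const_mul_sin_comp hxc hxc' hφ hφ' a t]
  exact cartPendulum_transverse_accel_eq (sin_sq_add_cos_sq (φ t)) (hden t) (heom1 t) (heom2 t)
end
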